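/- For every n ≥ 1, the number of equivalence classes of primitive binary strings of length n under the combined action of cyclic shifts and inversion equals γₙ = (1/(2n))·Σ_{m | n, m odd} μ(m)·2^{n/m}, where μ is the Möbius function. Equivalently, 2n·|N̄(n)| = Σ_{m | n, m odd} μ(m)·2^{n/m}. -/

import Mathlib

open Finset

namespace Necklaces

variable {n : ℕ}

/-- The cyclic left shift `L` on binary strings of length `n`. -/
def shiftL (s : Fin n → Bool) : Fin n → Bool :=
  fun i => s ⟨(i.val + 1) % n, Nat.mod_lt _ (Nat.lt_of_le_of_lt (Nat.zero_le _) i.isLt)⟩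

/-- Digitwise inversion (complement) `ι`. -/
def inv (s : Fin n → Bool) : Fin n → Bool := fun i => !(s i)

/-- A string is primitive if no nontrivial cyclic shift fixes it. -/
def Primitive (s : Fin n → Bool) : Prop :=
  ∀ k : ℕ, 0 < k → k < n → shiftL^[k] s ≠ s

/-- The necklace `⟨s⟩`: the orbit of `s` under cyclic shifts. -/
def necklace (s : Fin n → Bool) : Set (Fin n → Bool) :=
  {t | ∃ k : ℕ, t = shiftL^[k] s}

/-- The necklace inversion class `[s]`: the orbit of `s` under cyclic shifts and inversion. -/
def invClass (s : Fin n → Bool) : Set (Fin n → Bool) :=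
  {t | ∃ k : ℕ, t = shiftL^[k] s ∨ t = inv (shiftL^[k] s)}

/-- The number of 1's in `s`. -/
def onesCard (s : Fin n → Bool) : ℕ := (univ.filter (fun i => s i = true)).card

/-- The mod-2 partial sum map `Ξ`: the `i`-th digit of `Ξ(s)` is `s₁+⋯+sᵢ (mod 2)`. -/
def xi (s : Fin n → Bool) : Fin n → Bool :=
  fun i => decide (Odd ((Finset.Iic i).filter (fun j => s j = true)).card)

/-- `ι(s)` is a cyclic shift of `s`. -/
def ReflexiveStr (s : Fin n → Bool) : Prop := ∃ k : ℕ, shiftL^[k] s = inv s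

/-- `s` consists of two copies of a primitive string of length `n/2`
with an odd number of 1's. -/
def TwoCopies (s : Fin n → Bool) : Prop :=
  n % 2 = 0 ∧ shiftL^[n / 2] s = s ∧ (∀ k : ℕ, 0 < k → k < n / 2 → shiftL^[k] s ≠ s) ∧
    Odd ((univ.filter (fun i : Fin n => i.val < n / 2 ∧ s i = true)).card)

/-- `s` generates a necklace belonging to `Ñ⁺(n)`. -/
def GoodPlus (s : Fin n → Bool) : Prop :=
  (Primitive s ∧ Even (onesCard s)) ∨ TwoCopies s

/-- The set `Ñ⁺(n)` of necklaces. -/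
def NtildePlus (n : ℕ) : Set (Set (Fin n → Bool)) :=
  {N | ∃ s : Fin n → Bool, GoodPlus s ∧ N = necklace s}

/-- The set `N̄(n)` of necklace inversion classes of primitive strings. -/
def Nbar (n : ℕ) : Set (Set (Fin n → Bool)) :=
  {C | ∃ s : Fin n → Bool, Primitive s ∧ C = invClass s}

/-- Lexicographic order on strings, with `0 < 1` and the leftmost digit most significant. -/
def strLt (s t : Fin n → Bool) : Prop :=
  ∃ i : Fin n, (∀ j : Fin n, j < i → s j = t j) ∧ s i < t i

/-- Extended lexicographic order on extended strings `s^b`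
(`b = false` encodes `−`, `b = true` encodes `+`). -/
def extLt (p q : (Fin n → Bool) × Bool) : Prop :=
  strLt p.1 q.1 ∨ (p.1 = q.1 ∧ p.2 < q.2)

/-- The twisted shift operator `F`. -/
def twistF (s : Fin n → Bool) : Fin n → Bool :=
  if h : 0 < n then
    (if shiftL s ⟨0, h⟩ = true then shiftL s else inv (shiftL s))
  else s

/-- The extended twisted shift operator `F̃`. -/
def extF (p : (Fin n → Bool) × Bool) : (Fin n → Bool) × Bool :=
  if h : 0 < n then
    (if twistF p.1 ⟨n - 1, Nat.sub_lt h Nat.one_pos⟩ = true then (twistF p.1, p.2)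
     else (twistF p.1, !p.2))
  else p

/-- Cyclic successor on `Fin n`. -/
def finSucc (i : Fin n) : Fin n :=
  ⟨(i.val + 1) % n, Nat.mod_lt _ (Nat.lt_of_le_of_lt (Nat.zero_le _) i.isLt)⟩

open scoped Classical in
/-- The (0-based) lexicographic rank of `μ i` among `μ₁,…,μₙ`:
the number of indices `j` with `μ j` strictly smaller than `μ i`. -/
noncomputable def rankOf {X : Type*} (lt : X → X → Prop) (μ : Fin n → X) (i : Fin n) : ℕ :=
  (univ.filter (fun j => lt (μ j) (μ i))).card

/-- `σ` is the cyclic permutation `(r₁ r₂ ⋯ rₙ)` built from the ranks `rᵢ` of `μᵢ`: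
`σ(rᵢ) = r_{i+1}` (indices mod `n`). -/
def BuiltFrom {X : Type*} (lt : X → X → Prop) (μ : Fin n → X) (σ : Equiv.Perm (Fin n)) : Prop :=
  ∀ i j : Fin n, rankOf lt μ i = j.val → (σ j).val = rankOf lt μ (finSucc i)

/-- `σ` consists of a single `n`-cycle. -/
def IsCyclicPerm (σ : Equiv.Perm (Fin n)) : Prop :=
  ∀ x y : Fin n, ∃ k : ℕ, (σ ^ k) x = y

/-- `σ` is unimodal: decreasing on an initial segment, then increasing. -/
def IsUnimodal (σ : Equiv.Perm (Fin n)) : Prop :=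
  ∃ m : Fin n, (∀ i j : Fin n, i ≤ j → j ≤ m → σ j ≤ σ i) ∧
    (∀ i j : Fin n, m ≤ i → i ≤ j → σ i ≤ σ j)

/-- Cyclic unimodal permutations. -/
def CUPperm (σ : Equiv.Perm (Fin n)) : Prop := IsCyclicPerm σ ∧ IsUnimodal σ

/-- The string `A(σ)` obtained from the itinerary of `σ` (`+ ↦ 0`, `− ↦ 1`),
with the last digit chosen so that the total number of 1's is even.
(Here `m = σ⁻¹ 0` is the unique element with `σ m` least.) -/
def Astr [NeZero n] (σ : Equiv.Perm (Fin n)) : Fin n → Bool :=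
  fun i =>
    if i.val + 1 < n then decide ((σ ^ (i.val + 1)) (σ⁻¹ 0) < σ⁻¹ 0)
    else decide (Odd ((univ.filter (fun j : Fin n =>
      j.val + 1 < n ∧ (σ ^ (j.val + 1)) (σ⁻¹ 0) < σ⁻¹ 0)).card))

/-- The string used for `Ψ(σ)`: itinerary digits with the last digit chosen
so that the total number of 1's is odd. -/
def BstrOdd [NeZero n] (σ : Equiv.Perm (Fin n)) : Fin n → Bool :=
  fun i =>
    if i.val + 1 < n then decide ((σ ^ (i.val + 1)) (σ⁻¹ 0) < σ⁻¹ 0)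
    else !(decide (Odd ((univ.filter (fun j : Fin n =>
      j.val + 1 < n ∧ (σ ^ (j.val + 1)) (σ⁻¹ 0) < σ⁻¹ 0)).card)))

/-- The itinerary of a cyclic unimodal permutation: `none` encodes `⋆` (position `n`),
`some true` encodes `−` (i.e. `σⁱ(m) < m`), `some false` encodes `+` (i.e. `σⁱ(m) > m`). -/
def itin [NeZero n] (σ : Equiv.Perm (Fin n)) : Fin n → Option Bool :=
  fun i =>
    if i.val + 1 = n then none
    else some (decide ((σ ^ (i.val + 1)) (σ⁻¹ 0) < σ⁻¹ 0))

/-- `σ` arises from the class `C` by the construction defining `λ`: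
for some representative `t` of `C` beginning with `1`, `σ` is the cyclic permutation
built from the lexicographic ranks of the iterates of `t` under `F` (non-reflexive case)
or of `t^−` under `F̃` (reflexive case). -/
def LamRel [NeZero n] (C : Set (Fin n → Bool)) (σ : Equiv.Perm (Fin n)) : Prop :=
  ∃ t : Fin n → Bool, t 0 = true ∧ C = invClass t ∧
    ((¬ ReflexiveStr t ∧ BuiltFrom strLt (fun i : Fin n => twistF^[i.val] t) σ) ∨
     (ReflexiveStr t ∧ BuiltFrom extLt (fun i : Fin n => extF^[i.val] (t, false)) σ))

/-- `σ` arises from the representative `s` by the Weiss–Rogers construction `Φ`: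
`σ` is the cyclic permutation built from the lexicographic ranks of
`νᵢ = ι(Ξ(L^{i-1}(s)))`. -/
def PhiBuilt (s : Fin n → Bool) (σ : Equiv.Perm (Fin n)) : Prop :=
  BuiltFrom strLt (fun i : Fin n => inv (xi (shiftL^[i.val] s))) σ

end Necklaces

/-!
A primitive string has `2n` images under shifts and inversion, or only `n` when `ι s` is a
shift of `s`; so `2n·|N̄(n)|` counts the primitive strings, the reflexive ones twice. Give every
string this weight. For `e ∣ n`, among the strings with `L^e s = s` and minimal period `d`, those
with `e / d` even are exactly the solutions of `L^{e/2} s = s`, and the reflexive ones with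
`e / d` odd are exactly the solutions of `L^{e/2} s = ι s`; adding the alternating string
`0^{e/2} 1^{e/2} 0^{e/2} ⋯` digitwise mod 2 exchanges the two families. Hence the weights of the
strings with `L^e s = s` and `e / d` odd add up to `2^e`, and Möbius inversion over odd
divisors gives the formula.
-/

namespace Necklaces

open Function

variable {n : ℕ}

section Shift

theorem shiftL_iterate_apply (k : ℕ) (s : Fin n → Bool) (i : Fin n) :
    shiftL^[k] s i = s ⟨(i + k) % n, Nat.mod_lt _ i.pos⟩ := by
  induction k generalizing i with
  | zero => simp [Nat.mod_eq_of_lt i.isLt]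
  | succ k ih =>
    rw [iterate_succ_apply', shiftL, ih]
    simp only [Nat.mod_add_mod, Nat.add_right_comm, Nat.add_assoc]

theorem isPeriodicPt_shiftL (s : Fin n → Bool) : IsPeriodicPt shiftL n s := by
  funext i
  rw [shiftL_iterate_apply]
  simp [Nat.mod_eq_of_lt i.isLt]

theorem mem_periodicPts_shiftL (hn : 0 < n) (s : Fin n → Bool) : s ∈ periodicPts shiftL :=
  mk_mem_periodicPts hn (isPeriodicPt_shiftL s)

theorem minimalPeriod_shiftL_pos (hn : 0 < n) (s : Fin n → Bool) :
    0 < minimalPeriod shiftL s :=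
  minimalPeriod_pos_of_mem_periodicPts (mem_periodicPts_shiftL hn s)

theorem shiftL_iterate_inv (k : ℕ) (s : Fin n → Bool) :
    shiftL^[k] (inv s) = inv (shiftL^[k] s) :=
  (Commute.iterate_left (f := shiftL) (g := inv) (fun _ => rfl) k).eq s

theorem inv_involutive : Involutive (inv (n := n)) := fun s => funext fun i => by simp [inv]

theorem inv_ne_self (hn : 0 < n) (s : Fin n → Bool) : inv s ≠ s :=
  fun h => by simpa [inv] using congrFun h ⟨0, hn⟩

theorem minimalPeriod_inv (s : Fin n → Bool) :
    minimalPeriod shiftL (inv s) = minimalPeriod shiftL s :=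
  minimalPeriod_eq_minimalPeriod_iff.mpr fun k => by
    simp only [IsPeriodicPt, IsFixedPt, shiftL_iterate_inv, inv_involutive.injective.eq_iff]

theorem primitive_iff_minimalPeriod_eq (hn : 0 < n) (s : Fin n → Bool) :
    Primitive s ↔ minimalPeriod shiftL s = n := by
  have hdvd := (isPeriodicPt_shiftL s).minimalPeriod_dvd
  refine ⟨fun hs => ?_, fun hs k hk hkn => ?_⟩
  · refine (Nat.le_of_dvd hn hdvd).eq_or_lt.resolve_right fun hlt => ?_
    exact hs _ (minimalPeriod_shiftL_pos hn s) hlt iterate_minimalPeriod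
  · exact not_isPeriodicPt_of_pos_of_lt_minimalPeriod hk.ne' (hs.symm ▸ hkn)

end Shift

section Classes

theorem necklace_eq_image (hn : 0 < n) (s : Fin n → Bool) :
    necklace s = (shiftL^[·] s) '' Set.Iio (minimalPeriod shiftL s) := by
  ext t
  constructor
  · rintro ⟨k, rfl⟩
    exact ⟨k % minimalPeriod shiftL s, Nat.mod_lt _ (minimalPeriod_shiftL_pos hn s),
      iterate_mod_minimalPeriod_eq⟩
  · rintro ⟨k, -, rfl⟩
    exact ⟨k, rfl⟩

theorem ncard_necklace (hn : 0 < n) (s : Fin n → Bool) :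
    (necklace s).ncard = minimalPeriod shiftL s := by
  rw [necklace_eq_image hn, iterate_injOn_Iio_minimalPeriod.ncard_image, Set.ncard_Iio_nat]

theorem necklace_subset_of_mem {s t : Fin n → Bool} (ht : t ∈ necklace s) :
    necklace t ⊆ necklace s := by
  rintro u ⟨j, rfl⟩
  obtain ⟨k, rfl⟩ := ht
  exact ⟨j + k, (iterate_add_apply ..).symm⟩

theorem mem_necklace_symm (hn : 0 < n) {s t : Fin n → Bool} (ht : t ∈ necklace s) :
    s ∈ necklace t := by
  obtain ⟨k, rfl⟩ := ht
  refine ⟨n * k - k, ?_⟩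
  rw [← iterate_add_apply, Nat.sub_add_cancel (Nat.le_mul_of_pos_left k hn)]
  exact ((isPeriodicPt_shiftL s).mul_const k).eq.symm

theorem necklace_eq_of_mem (hn : 0 < n) {s t : Fin n → Bool} (ht : t ∈ necklace s) :
    necklace t = necklace s :=
  (necklace_subset_of_mem ht).antisymm (necklace_subset_of_mem (mem_necklace_symm hn ht))

theorem inv_mem_necklace_inv {s t : Fin n → Bool} (ht : t ∈ necklace s) :
    inv t ∈ necklace (inv s) := by
  obtain ⟨k, rfl⟩ := ht
  exact ⟨k, (shiftL_iterate_inv k s).symm⟩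

theorem invClass_eq_union (s : Fin n → Bool) : invClass s = necklace s ∪ necklace (inv s) := by
  ext t
  simp only [invClass, necklace, Set.mem_union, Set.mem_ofPred_eq, shiftL_iterate_inv, exists_or]

theorem mem_invClass_self (s : Fin n → Bool) : s ∈ invClass s := ⟨0, Or.inl rfl⟩

theorem invClass_eq_of_mem (hn : 0 < n) {s t : Fin n → Bool} (ht : t ∈ invClass s) :
    invClass t = invClass s := by
  have key : ∀ {u}, u ∈ necklace s →
      necklace u ∪ necklace (inv u) = necklace s ∪ necklace (inv s) := fun hu => by
    rw [necklace_eq_of_mem hn hu, necklace_eq_of_mem hn (inv_mem_necklace_inv hu)]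
  rw [invClass_eq_union] at ht
  rw [invClass_eq_union t, invClass_eq_union s]
  rcases ht with ht | ht
  · exact key ht
  · have hu := key (inv_involutive s ▸ inv_mem_necklace_inv ht)
    rwa [inv_involutive t, Set.union_comm] at hu

theorem minimalPeriod_eq_of_mem_invClass (hn : 0 < n) {s t : Fin n → Bool}
    (ht : t ∈ invClass s) : minimalPeriod shiftL t = minimalPeriod shiftL s := by
  obtain ⟨k, rfl | rfl⟩ := ht
  · exact minimalPeriod_apply_iterate (mem_periodicPts_shiftL hn s) k
  · rw [minimalPeriod_inv, minimalPeriod_apply_iterate (mem_periodicPts_shiftL hn s) k]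

theorem reflexiveStr_of_mem_invClass {s t : Fin n → Bool} (ht : t ∈ invClass s)
    (hs : ReflexiveStr s) : ReflexiveStr t := by
  obtain ⟨j, hj⟩ := hs
  refine ⟨j, ?_⟩
  obtain ⟨k, rfl | rfl⟩ := ht
  · rw [← iterate_add_apply, add_comm, iterate_add_apply, hj, shiftL_iterate_inv]
  · rw [shiftL_iterate_inv, ← iterate_add_apply, add_comm, iterate_add_apply, hj,
      shiftL_iterate_inv]

theorem reflexiveStr_iff_of_mem_invClass (hn : 0 < n) {s t : Fin n → Bool}
    (ht : t ∈ invClass s) : ReflexiveStr t ↔ ReflexiveStr s :=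
  ⟨reflexiveStr_of_mem_invClass (invClass_eq_of_mem hn ht ▸ mem_invClass_self s),
    reflexiveStr_of_mem_invClass ht⟩

open scoped Classical in
theorem ncard_invClass (hn : 0 < n) (s : Fin n → Bool) :
    (invClass s).ncard =
      if ReflexiveStr s then minimalPeriod shiftL s else 2 * minimalPeriod shiftL s := by
  rw [invClass_eq_union]
  split_ifs with hs
  · obtain ⟨k, hk⟩ := hs
    rw [← hk, necklace_eq_of_mem hn ⟨k, rfl⟩, Set.union_self, ncard_necklace hn]
  · have hdisj : Disjoint (necklace s) (necklace (inv s)) := by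
      refine Set.disjoint_left.mpr fun x hxs hxi => hs ?_
      obtain ⟨k, hk⟩ := necklace_subset_of_mem hxs (mem_necklace_symm hn hxi)
      exact ⟨k, hk.symm⟩
    rw [Set.ncard_union_eq hdisj, ncard_necklace hn, ncard_necklace hn, minimalPeriod_inv,
      two_mul]

open scoped Classical in
noncomputable def classWeight (s : Fin n → Bool) : ℕ := if ReflexiveStr s then 2 else 1

theorem ncard_invClass_mul_classWeight (hn : 0 < n) (s : Fin n → Bool) :
    (invClass s).ncard * classWeight s = 2 * minimalPeriod shiftL s := by
  rw [ncard_invClass hn, classWeight]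
  split_ifs <;> ring

theorem classWeight_eq_of_mem_invClass (hn : 0 < n) {s t : Fin n → Bool}
    (ht : t ∈ invClass s) : classWeight t = classWeight s := by
  classical
  simp only [classWeight]
  exact if_congr (reflexiveStr_iff_of_mem_invClass hn ht) rfl rfl

open scoped Classical in
noncomputable def weightedCount (n d : ℕ) : ℕ :=
  ∑ s : Fin n → Bool with minimalPeriod shiftL s = d, classWeight s

theorem two_mul_mul_ncard_Nbar (hn : 0 < n) : 2 * n * (Nbar n).ncard = weightedCount n n := by
  classical
  set T : Finset (Fin n → Bool) := {s | minimalPeriod shiftL s = n}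
  have hNbar : Nbar n = ↑(T.image invClass) := by
    ext C
    simp [Nbar, T, primitive_iff_minimalPeriod_eq hn, eq_comm]
  have hfiber : ∀ s ∈ T, ∑ t ∈ T with invClass t = invClass s, classWeight t = 2 * n := by
    intro s hs
    have hs : minimalPeriod shiftL s = n := (mem_filter.mp hs).2
    have hcoe : (({t ∈ T | invClass t = invClass s} : Finset _) : Set _) = invClass s := by
      ext t
      simp only [T, coe_filter, mem_filter, mem_univ, true_and, Set.mem_ofPred_eq]
      refine ⟨fun ⟨_, h⟩ => h ▸ mem_invClass_self t, fun ht => ?_⟩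
      exact ⟨(minimalPeriod_eq_of_mem_invClass hn ht).trans hs, invClass_eq_of_mem hn ht⟩
    calc ∑ t ∈ T with invClass t = invClass s, classWeight t
        = ∑ t ∈ T with invClass t = invClass s, classWeight s :=
          sum_congr rfl fun t ht => classWeight_eq_of_mem_invClass hn
            (hcoe ▸ (mem_coe.mpr ht))
      _ = (invClass s).ncard * classWeight s := by
          rw [sum_const, smul_eq_mul, ← Set.ncard_coe_finset, hcoe]
      _ = 2 * n := by rw [ncard_invClass_mul_classWeight hn, hs]
  rw [weightedCount, hNbar, Set.ncard_coe_finset,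
    ← sum_fiberwise_of_maps_to (fun s hs => mem_image_of_mem invClass hs), mul_comm,
    ← smul_eq_mul, ← sum_const]
  refine (sum_congr rfl fun C hC => ?_).symm
  obtain ⟨s, hs, rfl⟩ := mem_image.mp hC
  exact hfiber s hs

end Classes

section Counting

theorem apply_eq_apply_mod_of_isPeriodicPt {e : ℕ} (he : 0 < e) (hen : e ≤ n)
    {s : Fin n → Bool} (hs : IsPeriodicPt shiftL e s) (i : Fin n) :
    s i = s ⟨i % e, (Nat.mod_lt _ he).trans_le hen⟩ := by
  have := congrFun (hs.mul_const (i / e)).eq ⟨i % e, (Nat.mod_lt _ he).trans_le hen⟩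
  rw [shiftL_iterate_apply] at this
  rw [← this]
  congr 1
  ext
  simp [Nat.mod_add_div, Nat.mod_eq_of_lt i.isLt]

open scoped Classical in
theorem card_isPeriodicPt_shiftL (hn : 0 < n) {e : ℕ} (he : e ∣ n) :
    #{s : Fin n → Bool | IsPeriodicPt shiftL e s} = 2 ^ e := by
  have he0 : 0 < e := Nat.pos_of_dvd_of_pos he hn
  have hen : e ≤ n := Nat.le_of_dvd hn he
  rw [show 2 ^ e = Fintype.card (Fin e → Bool) by simp, ← card_univ]
  refine card_nbij' (fun s j => s ⟨j, j.isLt.trans_le hen⟩)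
    (fun t i => t ⟨i % e, Nat.mod_lt _ he0⟩) (fun _ _ => mem_coe.mpr (mem_univ _)) ?_ ?_ ?_
  · intro t _
    simp only [coe_filter, mem_univ, true_and, Set.mem_ofPred_eq]
    funext i
    simp only [shiftL_iterate_apply, Nat.mod_mod_of_dvd _ he, Nat.add_mod_right]
  · intro s hs
    funext i
    exact (apply_eq_apply_mod_of_isPeriodicPt he0 hen (mem_filter.mp hs).2 i).symm
  · intro t _
    funext j
    simp [Nat.mod_eq_of_lt j.isLt]

def alternatingBlocks (h : ℕ) : Fin n → Bool := fun i => decide (Odd (i / h))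

theorem shiftL_iterate_alternatingBlocks {h : ℕ} (hh : 2 * h ∣ n) :
    shiftL^[h] (alternatingBlocks h) = inv (alternatingBlocks (n := n) h) := by
  obtain ⟨m, hm⟩ := hh
  funext i
  have h0 : 0 < h := Nat.pos_of_ne_zero fun h0 => by simpa [h0, hm] using i.pos
  have key : ∀ x, (x + h) % n / h % 2 = (x / h + 1) % 2 := fun x => by
    rw [hm, mul_right_comm, mul_comm, Nat.mod_mul_right_div_self, Nat.add_div_right _ h0,
      Nat.mod_mod_of_dvd _ (dvd_mul_right 2 m)]
  rw [shiftL_iterate_apply]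
  simp only [alternatingBlocks, inv, Nat.odd_iff, key]
  rcases Nat.mod_two_eq_zero_or_one (i / h) with h2 | h2 <;> simp [Nat.add_mod, h2]

open scoped Classical in
theorem card_shiftL_iterate_eq_inv {h : ℕ} (hh : 2 * h ∣ n) :
    #{s : Fin n → Bool | shiftL^[h] s = inv s} = #{s : Fin n → Bool | shiftL^[h] s = s} := by
  have hc := shiftL_iterate_alternatingBlocks hh
  let flip : (Fin n → Bool) → Fin n → Bool := fun s i => xor (s i) (alternatingBlocks h i)
  have flip_flip : ∀ s, flip (flip s) = s := fun s => funext fun i => by simp [flip]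
  refine card_nbij' flip flip (fun s hs => ?_) (fun s hs => ?_) (fun s _ => flip_flip s)
    (fun s _ => flip_flip s)
  all_goals
    simp only [coe_filter, mem_univ, true_and, Set.mem_ofPred_eq] at hs ⊢
    funext i
    have hsi := congrFun hs i
    have hci := congrFun hc i
    simp only [shiftL_iterate_apply, inv, flip] at hsi hci ⊢
    simp [hsi, hci]

theorem ReflexiveStr.exists_minimalPeriod_eq_two_mul (hn : 0 < n) {s : Fin n → Bool}
    (hs : ReflexiveStr s) :
    ∃ c, minimalPeriod shiftL s = 2 * c ∧ shiftL^[c] s = inv s := by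
  obtain ⟨k, hk⟩ := hs
  set r := k % minimalPeriod shiftL s
  have hr : shiftL^[r] s = inv s := iterate_mod_minimalPeriod_eq.trans hk
  have hr0 : r ≠ 0 := fun h0 => inv_ne_self hn s (by rw [← hr, h0, iterate_zero, id])
  have h2r : IsPeriodicPt shiftL (2 * r) s := by
    rw [IsPeriodicPt, IsFixedPt, two_mul, iterate_add_apply, hr, shiftL_iterate_inv, hr,
      inv_involutive]
  refine ⟨r, (Nat.eq_of_dvd_of_lt_two_mul (by omega) h2r.minimalPeriod_dvd ?_).symm, hr⟩
  exact Nat.mul_lt_mul_of_pos_left (Nat.mod_lt _ (minimalPeriod_shiftL_pos hn s)) two_pos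

theorem isPeriodicPt_and_even_iff (hn : 0 < n) (s : Fin n → Bool) (e : ℕ) :
    (IsPeriodicPt shiftL e s ∧ Even (e / minimalPeriod shiftL s)) ↔
      (2 ∣ e ∧ IsPeriodicPt shiftL (e / 2) s) := by
  have hp := minimalPeriod_shiftL_pos hn s
  simp only [isPeriodicPt_iff_minimalPeriod_dvd]
  constructor
  · rintro ⟨⟨q, rfl⟩, r, hr⟩
    rw [Nat.mul_div_cancel_left _ hp] at hr
    rw [hr, ← two_mul, mul_left_comm, Nat.mul_div_cancel_left _ two_pos]
    exact ⟨dvd_mul_right _ _, dvd_mul_right _ _⟩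
  · rintro ⟨⟨f, rfl⟩, hf⟩
    rw [Nat.mul_div_cancel_left _ two_pos] at hf
    obtain ⟨r, rfl⟩ := hf
    rw [mul_left_comm, Nat.mul_div_cancel_left _ hp]
    exact ⟨dvd_mul_right _ _, even_two_mul r⟩

theorem isPeriodicPt_and_odd_and_reflexiveStr_iff (hn : 0 < n) (s : Fin n → Bool) (e : ℕ) :
    (IsPeriodicPt shiftL e s ∧ Odd (e / minimalPeriod shiftL s) ∧ ReflexiveStr s) ↔
      (2 ∣ e ∧ shiftL^[e / 2] s = inv s) := by
  constructor
  · rintro ⟨he, ⟨q, hq⟩, hs⟩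
    obtain ⟨f, hf⟩ := he.minimalPeriod_dvd
    obtain ⟨c, hc, hcs⟩ := hs.exists_minimalPeriod_eq_two_mul hn
    rw [hf, Nat.mul_div_cancel_left _ (minimalPeriod_shiftL_pos hn s)] at hq
    have he2 : e = 2 * (c + q * minimalPeriod shiftL s) := by rw [hf, hq, hc]; ring
    rw [he2, Nat.mul_div_cancel_left _ two_pos, iterate_add_apply,
      ((isPeriodicPt_minimalPeriod shiftL s).const_mul q).eq, hcs]
    exact ⟨dvd_mul_right _ _, rfl⟩
  · rintro ⟨⟨f, rfl⟩, hs⟩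
    rw [Nat.mul_div_cancel_left _ two_pos] at hs
    have he : IsPeriodicPt shiftL (2 * f) s := by
      rw [IsPeriodicPt, IsFixedPt, two_mul, iterate_add_apply, hs, shiftL_iterate_inv, hs,
        inv_involutive]
    refine ⟨he, Nat.not_even_iff_odd.mp fun hev => inv_ne_self hn s ?_, f, hs⟩
    have hf := ((isPeriodicPt_and_even_iff hn s _).mp ⟨he, hev⟩).2
    rwa [Nat.mul_div_cancel_left _ two_pos, IsPeriodicPt, IsFixedPt, hs] at hf

open scoped Classical in
theorem sum_classWeight (S : Finset (Fin n → Bool)) :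
    ∑ s ∈ S, classWeight s = #S + #{s ∈ S | ReflexiveStr s} := by
  rw [card_eq_sum_ones, card_filter, ← sum_add_distrib]
  refine sum_congr rfl fun s _ => ?_
  simp only [classWeight]
  split_ifs <;> rfl

open scoped Classical in
theorem sum_weightedCount_odd (hn : 0 < n) {e : ℕ} (he : e ∣ n) :
    ∑ d ∈ e.divisors with Odd (e / d), weightedCount n d = 2 ^ e := by
  have he0 : e ≠ 0 := (Nat.pos_of_dvd_of_pos he hn).ne'
  set P : Finset (Fin n → Bool) := {s | IsPeriodicPt shiftL e s}
  have hrefl : #{s ∈ {s ∈ P | Odd (e / minimalPeriod shiftL s)} | ReflexiveStr s} =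
      #{s ∈ P | ¬Odd (e / minimalPeriod shiftL s)} := by
    calc #{s ∈ {s ∈ P | Odd (e / minimalPeriod shiftL s)} | ReflexiveStr s}
        = #{s : Fin n → Bool | 2 ∣ e ∧ shiftL^[e / 2] s = inv s} := by
          simp only [P, filter_filter, and_assoc, isPeriodicPt_and_odd_and_reflexiveStr_iff hn]
      _ = #{s : Fin n → Bool | 2 ∣ e ∧ shiftL^[e / 2] s = s} := by
          by_cases h2 : 2 ∣ e
          · simp only [h2, true_and]
            exact card_shiftL_iterate_eq_inv ((Nat.mul_div_cancel' h2).symm ▸ he)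
          · simp [h2]
      _ = #{s ∈ P | ¬Odd (e / minimalPeriod shiftL s)} := by
          simp only [P, filter_filter, Nat.not_odd_iff_even, isPeriodicPt_and_even_iff hn]
          rfl
  calc ∑ d ∈ e.divisors with Odd (e / d), weightedCount n d
      = ∑ s ∈ P with Odd (e / minimalPeriod shiftL s), classWeight s := by
        simp only [weightedCount]
        rw [sum_fiberwise_eq_sum_filter]
        simp only [P, filter_filter]
        congr 1
        ext s
        simp [isPeriodicPt_iff_minimalPeriod_dvd, he0]
    _ = #{s ∈ P | Odd (e / minimalPeriod shiftL s)} +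
          #{s ∈ P | ¬Odd (e / minimalPeriod shiftL s)} := by
        rw [sum_classWeight, hrefl]
    _ = 2 ^ e := by rw [card_filter_add_card_filter_not, card_isPeriodicPt_shiftL hn he]

end Counting

section OddMoebiusInversion

open ArithmeticFunction

theorem sum_divisors_moebius (k : ℕ) :
    ∑ m ∈ k.divisors, moebius m = if k = 1 then 1 else 0 := by
  rw [← coe_mul_zeta_apply, moebius_mul_coe_zeta, one_apply]

theorem mem_odd_divisors_and_mem_odd_divisors_div_comm {N : ℕ} (hN : N ≠ 0) (m d : ℕ) :
    (m ∈ N.divisors.filter Odd ∧ d ∈ (N / m).divisors.filter fun d => Odd (N / m / d)) ↔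
      (m ∈ (N / d).divisors ∧ d ∈ N.divisors.filter fun d => Odd (N / d)) := by
  simp only [mem_filter, Nat.mem_divisors, Nat.div_div_eq_div_mul]
  constructor
  · rintro ⟨⟨⟨hmN, -⟩, hm⟩, ⟨hdm, -⟩, hodd⟩
    have hmd : m * d ∣ N := Nat.mul_dvd_of_dvd_div hmN hdm
    have hdN : d ∣ N := dvd_of_mul_left_dvd hmd
    have hmNd : m ∣ N / d := (Nat.dvd_div_iff_mul_dvd hdN).mpr (mul_comm m d ▸ hmd)
    refine ⟨⟨hmNd, (Nat.div_ne_zero_iff_of_dvd hdN).mpr ⟨hN, ?_⟩⟩, ⟨hdN, hN⟩, ?_⟩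
    · rintro rfl
      simp_all
    · rw [← Nat.mul_div_cancel' hmNd, Nat.odd_mul, Nat.div_div_eq_div_mul, mul_comm d]
      exact ⟨hm, hodd⟩
  · rintro ⟨⟨hmd, -⟩, ⟨hdN, -⟩, hodd⟩
    have hdm : d * m ∣ N := Nat.mul_dvd_of_dvd_div hdN hmd
    have hmN : m ∣ N := dvd_of_mul_left_dvd hdm
    rw [← Nat.mul_div_cancel' hmd, Nat.odd_mul, Nat.div_div_eq_div_mul, mul_comm d] at hodd
    have hdNm : d ∣ N / m := (Nat.dvd_div_iff_mul_dvd hmN).mpr (mul_comm d m ▸ hdm)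
    refine ⟨⟨⟨hmN, hN⟩, hodd.1⟩, ⟨hdNm, (Nat.div_ne_zero_iff_of_dvd hmN).mpr ⟨hN, ?_⟩⟩,
      hodd.2⟩
    rintro rfl
    simp_all

theorem sum_odd_smul_moebius_eq_of_sum_odd_eq {R : Type*} [AddCommGroup R] {f g : ℕ → R}
    {N : ℕ} (hN : N ≠ 0)
    (hfg : ∀ e ∈ N.divisors, ∑ d ∈ e.divisors with Odd (e / d), f d = g e) :
    ∑ m ∈ N.divisors with Odd m, moebius m • g (N / m) = f N := by
  calc ∑ m ∈ N.divisors with Odd m, moebius m • g (N / m)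
      = ∑ m ∈ N.divisors with Odd m,
          ∑ d ∈ (N / m).divisors with Odd (N / m / d), moebius m • f d := by
        refine sum_congr rfl fun m hm => ?_
        have hm := Nat.dvd_of_mem_divisors (mem_filter.mp hm).1
        rw [← hfg (N / m) (Nat.mem_divisors.mpr ⟨Nat.div_dvd_of_dvd hm, hN⟩), smul_sum]
    _ = ∑ d ∈ N.divisors with Odd (N / d), ∑ m ∈ (N / d).divisors, moebius m • f d :=
        sum_comm' (mem_odd_divisors_and_mem_odd_divisors_div_comm hN)
    _ = ∑ d ∈ N.divisors with Odd (N / d), if N / d = 1 then f d else 0 := by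
        refine sum_congr rfl fun d _ => ?_
        rw [← sum_smul, sum_divisors_moebius]
        split_ifs <;> simp
    _ = f N := by
        rw [sum_eq_single N (fun d hd hdN => if_neg fun h => hdN ?_) (fun h => ?_),
          Nat.div_self (Nat.pos_of_ne_zero hN), if_pos rfl]
        · exact Nat.eq_of_dvd_of_div_eq_one (Nat.dvd_of_mem_divisors (mem_filter.mp hd).1) h
        · simp [Nat.div_self (Nat.pos_of_ne_zero hN), hN] at h

end OddMoebiusInversion

open ArithmeticFunction in
/-- For every `n ≥ 1`, the number of equivalence classes of primitive
binary strings of length `n` under cyclic shifts and inversion equals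
`γₙ = (1/(2n)) Σ_{m ∣ n, m odd} μ(m) 2^{n/m}`; equivalently,
`2n·|N̄(n)| = Σ_{m ∣ n, m odd} μ(m)·2^{n/m}`. -/
theorem card_Nbar (n : ℕ) (hn : 0 < n) :
    ((2 * n * (Nbar n).ncard : ℕ) : ℤ) =
      ∑ m ∈ n.divisors.filter (fun m => m % 2 = 1), moebius m * 2 ^ (n / m) := by
  have hinv := sum_odd_smul_moebius_eq_of_sum_odd_eq (f := fun d => (weightedCount n d : ℤ))
    (g := fun e => 2 ^ e) hn.ne' fun e he => by
      exact_mod_cast sum_weightedCount_odd hn (Nat.dvd_of_mem_divisors he)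
  rw [two_mul_mul_ncard_Nbar hn, ← hinv]
  simp only [smul_eq_mul, Nat.odd_iff]

end Necklaces
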